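/- Let (E → G, ▷) be a crossed module of finite groups, let G act by automorphisms on finite groups X and Y, let f : Y → X be a G-equivariant group homomorphism, and suppose im(∂) ⊆ G acts trivially on both X and Y. Then the map ∂ : Fun(X) ⊗ ℂ[E] → Fun(Y) ⋊ ℂ[G], ξ⊗e ↦ f*ξ ⊗ ∂(e), together with the action (φ⊗g) ▷ (ξ⊗e) := φ(1)·(g▷ξ) ⊗ (g▷e), satisfies the first Peiffer relation: ∂((φ⊗g)▷(ξ⊗e)) = (φ₍₁₎⊗g)·∂(ξ⊗e)·S(φ₍₂₎⊗g). -/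

import Mathlib

open TensorProduct

noncomputable section

/-- The comultiplication of the group Hopf algebra `ℂ[K]`: `Δ(k) = k ⊗ k`. -/
def gaComul (K : Type*) [Group K] :
    MonoidAlgebra ℂ K →ₗ[ℂ] MonoidAlgebra ℂ K ⊗[ℂ] MonoidAlgebra ℂ K :=
  (Finsupp.lsum ℂ fun k => LinearMap.toSpanSingleton ℂ _
    (MonoidAlgebra.single k (1 : ℂ) ⊗ₜ[ℂ] MonoidAlgebra.single k (1 : ℂ))) ∘ₗ
    (MonoidAlgebra.coeffLinearEquiv ℂ).toLinearMap

/-- The counit of the group Hopf algebra `ℂ[K]`: `ε(k) = 1`. -/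
def gaCounit (K : Type*) [Group K] : MonoidAlgebra ℂ K →ₗ[ℂ] ℂ :=
  (Finsupp.lsum ℂ fun _ => (LinearMap.id : ℂ →ₗ[ℂ] ℂ)) ∘ₗ
    (MonoidAlgebra.coeffLinearEquiv ℂ).toLinearMap

/-- The comultiplication of `Fun(Y)`: `Δ(φ)(y ⊗ y') = φ(y y')`, concretely
`Δ(φ) = ∑ₐ δₐ ⊗ φ(a ⬝ ·)`. -/
def funComul (Y : Type*) [Group Y] [Fintype Y] [DecidableEq Y] :
    (Y → ℂ) →ₗ[ℂ] (Y → ℂ) ⊗[ℂ] (Y → ℂ) :=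
  ∑ a : Y,
    (TensorProduct.mk ℂ (Y → ℂ) (Y → ℂ) (Pi.single a (1 : ℂ))) ∘ₗ
      LinearMap.funLeft ℂ ℂ (fun y => a * y)

variable (Y G X E : Type*) [Group Y] [Group G] [Group X] [Group E]
  [Fintype Y] [Fintype G] [Fintype X] [Fintype E] [DecidableEq Y]

/-- The action of `ℂ[G]` on `Fun(Y)`: `(g ▷ ψ)(y) = ψ(g⁻¹ ▷ y)`. -/
def actFunY (ρ : G →* MulAut Y) :
    MonoidAlgebra ℂ G →ₗ[ℂ] (Y → ℂ) →ₗ[ℂ] (Y → ℂ) :=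
  (Finsupp.lsum ℂ fun g => LinearMap.toSpanSingleton ℂ _
    (LinearMap.funLeft ℂ ℂ (fun y => ρ g⁻¹ y))) ∘ₗ
    (MonoidAlgebra.coeffLinearEquiv ℂ).toLinearMap

/-- The multiplication `(φ ⊗ g) ⬝ (ψ ⊗ h) = φ (g ▷ ψ) ⊗ g h` of the crossed product
`Fun(Y) ⋊ ℂ[G]`. -/
def cpMul (ρ : G →* MulAut Y) :
    ((Y → ℂ) ⊗[ℂ] MonoidAlgebra ℂ G) ⊗[ℂ] ((Y → ℂ) ⊗[ℂ] MonoidAlgebra ℂ G) →ₗ[ℂ]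
      (Y → ℂ) ⊗[ℂ] MonoidAlgebra ℂ G :=
  (TensorProduct.map (LinearMap.mul' ℂ (Y → ℂ)) LinearMap.id) ∘ₗ
  (TensorProduct.assoc ℂ (Y → ℂ) (Y → ℂ) (MonoidAlgebra ℂ G)).symm.toLinearMap ∘ₗ
  (TensorProduct.map LinearMap.id
    ((TensorProduct.map (TensorProduct.lift (actFunY Y G ρ))
        (LinearMap.mul' ℂ (MonoidAlgebra ℂ G))) ∘ₗ
      (TensorProduct.tensorTensorTensorComm ℂ (MonoidAlgebra ℂ G) (MonoidAlgebra ℂ G)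
        (Y → ℂ) (MonoidAlgebra ℂ G)).toLinearMap)) ∘ₗ
  (TensorProduct.assoc ℂ (Y → ℂ) (MonoidAlgebra ℂ G ⊗[ℂ] MonoidAlgebra ℂ G)
    ((Y → ℂ) ⊗[ℂ] MonoidAlgebra ℂ G)).toLinearMap ∘ₗ
  (TensorProduct.map (TensorProduct.map LinearMap.id (gaComul G)) LinearMap.id)

/-- The unit `1 ⊗ 1` of `Fun(Y) ⋊ ℂ[G]`. -/
def cpOne : (Y → ℂ) ⊗[ℂ] MonoidAlgebra ℂ G :=
  (1 : Y → ℂ) ⊗ₜ[ℂ] (1 : MonoidAlgebra ℂ G)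

/-- The comultiplication `Δ(φ ⊗ g) = (φ₍₁₎ ⊗ g) ⊗ (φ₍₂₎ ⊗ g)` of `Fun(Y) ⋊ ℂ[G]`. -/
def cpComul :
    (Y → ℂ) ⊗[ℂ] MonoidAlgebra ℂ G →ₗ[ℂ]
      ((Y → ℂ) ⊗[ℂ] MonoidAlgebra ℂ G) ⊗[ℂ] ((Y → ℂ) ⊗[ℂ] MonoidAlgebra ℂ G) :=
  (TensorProduct.tensorTensorTensorComm ℂ (Y → ℂ) (Y → ℂ)
      (MonoidAlgebra ℂ G) (MonoidAlgebra ℂ G)).toLinearMap ∘ₗ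
    TensorProduct.map (funComul Y) (gaComul G)

/-- The counit `ε(φ ⊗ g) = φ(1)` of `Fun(Y) ⋊ ℂ[G]`. -/
def cpCounit : (Y → ℂ) ⊗[ℂ] MonoidAlgebra ℂ G →ₗ[ℂ] ℂ :=
  TensorProduct.lift
    ((LinearMap.proj (1 : Y) : (Y → ℂ) →ₗ[ℂ] ℂ).smulRight (gaCounit G))

/-- The action `(φ ⊗ g) ▷ (ξ ⊗ e) = φ(1) (g ▷ ξ) ⊗ (g ▷ e)` of `Fun(Y) ⋊ ℂ[G]` on
`Fun(X) ⊗ ℂ[E]`. -/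
def gexyAct (ρX : G →* MulAut X) (ρE : G →* MulAut E) :
    (Y → ℂ) ⊗[ℂ] MonoidAlgebra ℂ G →ₗ[ℂ]
      ((X → ℂ) ⊗[ℂ] MonoidAlgebra ℂ E) →ₗ[ℂ] (X → ℂ) ⊗[ℂ] MonoidAlgebra ℂ E :=
  TensorProduct.lift
    ((LinearMap.proj (1 : Y) : (Y → ℂ) →ₗ[ℂ] ℂ).smulRight
      ((Finsupp.lsum ℂ fun g => LinearMap.toSpanSingleton ℂ _
        (TensorProduct.map (LinearMap.funLeft ℂ ℂ (fun x => ρX g⁻¹ x))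
          (MonoidAlgebra.mapDomainLinearMap ℂ ℂ (fun e : E => ρE g e)))) ∘ₗ
        (MonoidAlgebra.coeffLinearEquiv ℂ).toLinearMap))

/-- The antipode `S(φ ⊗ g) = (g⁻¹ ▷ S(φ)) ⊗ g⁻¹` of `Fun(Y) ⋊ ℂ[G]`, where
`(g⁻¹ ▷ S(φ))(y) = φ((g ▷ y)⁻¹)`. -/
def cpAntipode (ρY : G →* MulAut Y) :
    (Y → ℂ) ⊗[ℂ] MonoidAlgebra ℂ G →ₗ[ℂ] (Y → ℂ) ⊗[ℂ] MonoidAlgebra ℂ G :=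
  TensorProduct.lift
    ((LinearMap.lcomp ℂ _ (MonoidAlgebra.coeffLinearEquiv ℂ (M := G) (S := ℂ)).toLinearMap) ∘ₗ
      (Finsupp.lsum ℂ :
        (G → ℂ →ₗ[ℂ] (Y → ℂ) ⊗[ℂ] MonoidAlgebra ℂ G) ≃ₗ[ℂ]
          ((G →₀ ℂ) →ₗ[ℂ] (Y → ℂ) ⊗[ℂ] MonoidAlgebra ℂ G)).toLinearMap ∘ₗ
      LinearMap.pi fun g =>
        (LinearMap.ringLmapEquivSelf ℂ ℂ
            ((Y → ℂ) ⊗[ℂ] MonoidAlgebra ℂ G)).symm.toLinearMap ∘ₗ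
          ((TensorProduct.mk ℂ (Y → ℂ) (MonoidAlgebra ℂ G)).flip
              (MonoidAlgebra.single g⁻¹ (1 : ℂ))) ∘ₗ
          LinearMap.funLeft ℂ ℂ (fun y => (ρY g y)⁻¹))

/-- The boundary `∂(ξ ⊗ e) = f*ξ ⊗ ∂(e)` from `Fun(X) ⊗ ℂ[E]` to `Fun(Y) ⋊ ℂ[G]`. -/
def gexyBdry (f : Y →* X) (d : E →* G) :
    (X → ℂ) ⊗[ℂ] MonoidAlgebra ℂ E →ₗ[ℂ] (Y → ℂ) ⊗[ℂ] MonoidAlgebra ℂ G :=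
  TensorProduct.map (LinearMap.funLeft ℂ ℂ f) (MonoidAlgebra.mapDomainLinearMap ℂ ℂ d)

/-- The "quantum adjoint action" `u ⊗ v ↦ u₍₁₎ ⬝ v ⬝ S(u₍₂₎)` of `Fun(Y) ⋊ ℂ[G]` on
itself (all products taken in the crossed product). -/
def cpAdjoint (ρY : G →* MulAut Y) :
    ((Y → ℂ) ⊗[ℂ] MonoidAlgebra ℂ G) ⊗[ℂ] ((Y → ℂ) ⊗[ℂ] MonoidAlgebra ℂ G) →ₗ[ℂ]
      (Y → ℂ) ⊗[ℂ] MonoidAlgebra ℂ G :=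
  cpMul Y G ρY ∘ₗ
  (TensorProduct.map LinearMap.id (cpMul Y G ρY)) ∘ₗ
  (TensorProduct.map LinearMap.id
    (TensorProduct.comm ℂ ((Y → ℂ) ⊗[ℂ] MonoidAlgebra ℂ G)
      ((Y → ℂ) ⊗[ℂ] MonoidAlgebra ℂ G)).toLinearMap) ∘ₗ
  (TensorProduct.assoc ℂ ((Y → ℂ) ⊗[ℂ] MonoidAlgebra ℂ G)
    ((Y → ℂ) ⊗[ℂ] MonoidAlgebra ℂ G) ((Y → ℂ) ⊗[ℂ] MonoidAlgebra ℂ G)).toLinearMap ∘ₗ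
  (TensorProduct.map (TensorProduct.map LinearMap.id (cpAntipode Y G ρY))
    LinearMap.id) ∘ₗ
  (TensorProduct.map (cpComul Y G) LinearMap.id)

/-! Everything is checked on basis tensors `φ ⊗ g` and `ξ ⊗ e`. Since `Δφ = ∑ₐ δₐ ⊗ φ(a ·)`,
the adjoint action `(φ ⊗ g)₍₁₎ (ψ ⊗ h) S((φ ⊗ g)₍₂₎)` is
`(y ↦ ψ(g⁻¹ ▷ y) φ(y ((g h⁻¹ g⁻¹) ▷ y)⁻¹)) ⊗ g h g⁻¹`. When `h = ∂e` acts trivially on `Y`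
this is `φ(1) (g ▷ ψ) ⊗ g ∂(e) g⁻¹`; for `ψ = f*ξ`, equivariance of `f` and
`∂(g ▷ e) = g ∂(e) g⁻¹` identify it with `∂((φ ⊗ g) ▷ (ξ ⊗ e))`. -/

theorem Fintype.sum_pi_single_one_mul {ι R : Type*} [Fintype ι] [DecidableEq ι] [Semiring R]
    (F : ι → ι → R) : ∑ a, Pi.single a 1 * F a = fun i => F i i := by
  funext i
  simp [Pi.single_apply]

theorem gaComul_single {K : Type*} [Group K] (k : K) :
    gaComul K (MonoidAlgebra.single k 1) =
      MonoidAlgebra.single k 1 ⊗ₜ[ℂ] MonoidAlgebra.single k 1 := by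
  simp [gaComul]

section BasisFormulas

variable {Y G X E : Type*} [Group Y] [Group G] [Group X] [Group E]

theorem actFunY_single (ρ : G →* MulAut Y) (g : G) (ψ : Y → ℂ) :
    actFunY Y G ρ (MonoidAlgebra.single g 1) ψ = fun y => ψ (ρ g⁻¹ y) := by
  simp only [actFunY, LinearMap.coe_comp, Finsupp.coe_lsum, LinearEquiv.coe_coe,
    Function.comp_apply, MonoidAlgebra.coeffLinearEquiv_apply, MonoidAlgebra.coeff_single,
    LinearMap.toSpanSingleton_apply, zero_smul, Finsupp.sum_single_index, one_smul]
  rfl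

theorem cpMul_tmul_single (ρ : G →* MulAut Y) (φ ψ : Y → ℂ) (g h : G) :
    cpMul Y G ρ ((φ ⊗ₜ[ℂ] MonoidAlgebra.single g 1) ⊗ₜ[ℂ] (ψ ⊗ₜ[ℂ] MonoidAlgebra.single h 1)) =
      (φ * fun y => ψ (ρ g⁻¹ y)) ⊗ₜ[ℂ] MonoidAlgebra.single (g * h) 1 := by
  simp [cpMul, gaComul_single, actFunY_single]

theorem cpAntipode_tmul_single (ρ : G →* MulAut Y) (φ : Y → ℂ) (g : G) :
    cpAntipode Y G ρ (φ ⊗ₜ[ℂ] MonoidAlgebra.single g 1) =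
      (fun y => φ (ρ g y)⁻¹) ⊗ₜ[ℂ] MonoidAlgebra.single g⁻¹ 1 := by
  simp only [cpAntipode, lift.tmul, LinearMap.coe_comp, LinearEquiv.coe_coe,
    Function.comp_apply, LinearMap.lcomp_apply, MonoidAlgebra.coeffLinearEquiv_apply,
    MonoidAlgebra.coeff_single, Finsupp.coe_lsum, LinearMap.pi_apply, LinearMap.flip_apply,
    mk_apply, LinearMap.ringLmapEquivSelf_symm_apply, LinearMap.coe_smulRight,
    Module.End.one_apply, zero_smul, Finsupp.sum_single_index, one_smul]
  rfl

theorem cpComul_tmul_single [Fintype Y] [DecidableEq Y] (φ : Y → ℂ) (g : G) :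
    cpComul Y G (φ ⊗ₜ[ℂ] MonoidAlgebra.single g 1) =
      ∑ a : Y, (Pi.single a 1 ⊗ₜ[ℂ] MonoidAlgebra.single g 1) ⊗ₜ[ℂ]
        ((fun y => φ (a * y)) ⊗ₜ[ℂ] MonoidAlgebra.single g 1) := by
  simp only [cpComul, funComul, LinearMap.coe_comp, LinearEquiv.coe_coe, Function.comp_apply,
    map_tmul, LinearMap.coe_sum, Finset.sum_apply, mk_apply, gaComul_single, sum_tmul, map_sum,
    tensorTensorTensorComm_tmul]
  rfl

theorem cpAdjoint_tmul_single [Fintype Y] [DecidableEq Y] (ρ : G →* MulAut Y)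
    (φ ψ : Y → ℂ) (g h : G) :
    cpAdjoint Y G ρ ((φ ⊗ₜ[ℂ] MonoidAlgebra.single g 1) ⊗ₜ[ℂ] (ψ ⊗ₜ[ℂ] MonoidAlgebra.single h 1)) =
      (fun y => ψ (ρ g⁻¹ y) * φ (y * (ρ g (ρ h⁻¹ (ρ g⁻¹ y)))⁻¹)) ⊗ₜ[ℂ]
        MonoidAlgebra.single (g * h * g⁻¹) 1 := by
  simp only [cpAdjoint, LinearMap.comp_apply, map_tmul, cpComul_tmul_single, sum_tmul, map_sum,
    cpAntipode_tmul_single, LinearEquiv.coe_coe, assoc_tmul, comm_tmul, LinearMap.id_apply,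
    cpMul_tmul_single, ← mul_assoc]
  rw [← sum_tmul, Fintype.sum_pi_single_one_mul]
  rfl

theorem cpAdjoint_tmul_single_of_fixed [Fintype Y] [DecidableEq Y] (ρ : G →* MulAut Y)
    (φ ψ : Y → ℂ) (g h : G) (hh : ∀ y, ρ h y = y) :
    cpAdjoint Y G ρ ((φ ⊗ₜ[ℂ] MonoidAlgebra.single g 1) ⊗ₜ[ℂ] (ψ ⊗ₜ[ℂ] MonoidAlgebra.single h 1)) =
      φ 1 • ((fun y => ψ (ρ g⁻¹ y)) ⊗ₜ[ℂ] MonoidAlgebra.single (g * h * g⁻¹) 1) := by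
  have hh' (y : Y) : ρ h⁻¹ y = y := by simpa using (congrArg (ρ h⁻¹) (hh y)).symm
  rw [cpAdjoint_tmul_single, smul_tmul']
  congr 1
  funext y
  simp only [hh']
  simp [mul_comm]

theorem gexyAct_tmul_single (ρX : G →* MulAut X) (ρE : G →* MulAut E) (φ : Y → ℂ) (g : G)
    (ξ : X → ℂ) (e : E) :
    gexyAct Y G X E ρX ρE (φ ⊗ₜ[ℂ] MonoidAlgebra.single g 1) (ξ ⊗ₜ[ℂ] MonoidAlgebra.single e 1) =
      φ 1 • ((fun x => ξ (ρX g⁻¹ x)) ⊗ₜ[ℂ] MonoidAlgebra.single (ρE g e) 1) := by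
  simp only [gexyAct, lift.tmul, LinearMap.coe_smulRight, LinearMap.coe_proj, Function.eval,
    LinearMap.smul_apply, LinearMap.coe_comp, Finsupp.coe_lsum, LinearEquiv.coe_coe,
    Function.comp_apply, MonoidAlgebra.coeffLinearEquiv_apply, MonoidAlgebra.coeff_single,
    LinearMap.toSpanSingleton_apply, zero_smul, Finsupp.sum_single_index, one_smul, map_tmul,
    MonoidAlgebra.mapDomainLinearMap_single]
  rfl

theorem gexyBdry_tmul_single (f : Y →* X) (d : E →* G) (ξ : X → ℂ) (e : E) :
    gexyBdry Y G X E f d (ξ ⊗ₜ[ℂ] MonoidAlgebra.single e 1) =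
      (fun y => ξ (f y)) ⊗ₜ[ℂ] MonoidAlgebra.single (d e) 1 := by
  simp only [gexyBdry, map_tmul, MonoidAlgebra.mapDomainLinearMap_single]
  rfl

end BasisFormulas

theorem stmt11 (d : E →* G) (ρGE : G →* MulAut E)
    (ρY : G →* MulAut Y) (ρX : G →* MulAut X) (f : Y →* X)
    (grp_peiffer1 : ∀ (g : G) (e : E), d (ρGE g e) = g * d e * g⁻¹)
    (hequiv : ∀ (g : G) (y : Y), f (ρY g y) = ρX g (f y))
    (htrivY : ∀ (e : E) (y : Y), ρY (d e) y = y) :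
    gexyBdry Y G X E f d ∘ₗ TensorProduct.lift (gexyAct Y G X E ρX ρGE) =
      cpAdjoint Y G ρY ∘ₗ
        TensorProduct.map LinearMap.id (gexyBdry Y G X E f d) := by
  ext a g ξ e
  simp only [LinearMap.comp_apply, AlgebraTensorModule.curry_apply, curry_apply,
    LinearMap.coe_restrictScalars, MonoidAlgebra.lsingle_apply, lift.tmul, map_tmul,
    LinearMap.id_apply, gexyAct_tmul_single, map_smul, gexyBdry_tmul_single,
    cpAdjoint_tmul_single_of_fixed _ _ _ _ _ (htrivY e), grp_peiffer1, hequiv]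

end
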